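/- Let (a_n)_{n=0}^∞ be a Leja sequence on the unit circle S¹, and for each integer k ≥ 0 set N(k) = 1 + 4 + 4² + ⋯ + 4^k = (4^{k+1} − 1)/3. Then lim_{k→∞} (E_0(α_{N(k)}) + N(k) log N(k))/N(k) = log(4/3). -/

import Mathlib

open Filter Topology

/-- Logarithmic energy of the first `N` points of the sequence `a`. -/
noncomputable def logEnergy (a : ℕ → ℂ) (N : ℕ) : ℝ :=
  ∑ i ∈ Finset.range N, ∑ j ∈ Finset.range N,
    if i ≠ j then Real.log (1 / ‖a i - a j‖) else 0

/-- `a` is a Leja sequence on the unit circle: all points lie on the circle and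
`a (n+1)` maximizes `∏_{i=0}^{n} |z - a i|` over the circle. -/
def IsLejaSeq (a : ℕ → ℂ) : Prop :=
  (∀ n, ‖a n‖ = 1) ∧
  ∀ n : ℕ, ∀ z : ℂ, ‖z‖ = 1 →
    ∏ i ∈ Finset.range (n + 1), ‖z - a i‖ ≤
      ∏ i ∈ Finset.range (n + 1), ‖a (n + 1) - a i‖

/-!
If `a` is a Leja sequence on the circle, then `a (2m+1) = -a (2m)` for every `m` and
`m ↦ a (2m)²` is again a Leja sequence: once the odd points below `2m` are antipodal to their
predecessors, `∏_{i<2m} (z - a i) = ∏_{i<m} (z² - a (2i)²)`. Induction on `n` along `n ↦ n / 2` then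
gives `∏_{i<n} |a n - a i| = 2 ^ s(n)`, with `s(n)` the binary digit sum, so
`E_0(α_N) = -2 log 2 · ∑_{n<N} s(n)`. In binary `N(k) = 1 + 4 + ⋯ + 4^k` reads `101…01`, and
`∑_{n<N(k)} s(n) = k N(k)`; hence `(E_0(α_{N(k)}) + N(k) log N(k)) / N(k) = log (N(k) / 4^k)`,
which tends to `log (4/3)`.
-/

open Finset

@[to_additive sum_range_two_mul]
theorem Finset.prod_range_two_mul {M : Type*} [CommMonoid M] (f : ℕ → M) (n : ℕ) :
    ∏ i ∈ range (2 * n), f i = ∏ i ∈ range n, f (2 * i) * f (2 * i + 1) := by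
  induction n with
  | zero => simp
  | succ n ih => rw [Nat.mul_succ, prod_range_succ, prod_range_succ, ih, prod_range_succ, mul_assoc]

theorem Finset.sum_range_ite_ne_eq_two_nsmul {M : Type*} [AddCommMonoid M] (f : ℕ → ℕ → M)
    (hf : ∀ i j, f i j = f j i) (N : ℕ) :
    ∑ i ∈ range N, ∑ j ∈ range N, (if i ≠ j then f i j else 0) =
      2 • ∑ j ∈ range N, ∑ i ∈ range j, f i j := by
  induction N with
  | zero => simp
  | succ N ih =>
    have hcol : ∑ i ∈ range N, (if i ≠ N then f i N else 0) = ∑ i ∈ range N, f i N :=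
      sum_congr rfl fun i hi => if_pos (mem_range.1 hi).ne
    have hrow : ∑ j ∈ range N, (if N ≠ j then f N j else 0) = ∑ i ∈ range N, f i N :=
      sum_congr rfl fun j hj => by rw [if_pos (mem_range.1 hj).ne', hf]
    simp only [sum_range_succ, sum_add_distrib, ih, hcol, hrow, ne_eq, not_true_eq_false,
      if_false, add_zero, smul_add, two_smul]
    abel

namespace Nat

theorem sum_digits_two_two_mul (n : ℕ) : (digits 2 (2 * n)).sum = (digits 2 n).sum := by
  rcases n.eq_zero_or_pos with rfl | hn
  · simp
  · rw [digits_def' one_lt_two (by omega)]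
    simp

theorem sum_digits_two_two_mul_add_one (n : ℕ) :
    (digits 2 (2 * n + 1)).sum = (digits 2 n).sum + 1 := by
  rw [digits_def' one_lt_two (by omega)]
  simp [Nat.add_mod, Nat.add_mul_div_left, add_comm]

theorem sum_range_two_mul_sum_digits_two (M : ℕ) :
    ∑ n ∈ range (2 * M), (digits 2 n).sum = 2 * ∑ n ∈ range M, (digits 2 n).sum + M := by
  simp only [sum_range_two_mul, sum_digits_two_two_mul, sum_digits_two_two_mul_add_one,
    sum_add_distrib, sum_const, card_range, smul_eq_mul, mul_one]
  ring

theorem sum_digits_two_sum_range_four_pow (k : ℕ) :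
    (digits 2 (∑ j ∈ range (k + 1), 4 ^ j)).sum = k + 1 := by
  induction k with
  | zero => simp
  | succ k ih =>
    set N := ∑ j ∈ range (k + 1), 4 ^ j
    rw [geom_sum_succ, show 4 * N = 2 * (2 * N) by ring, sum_digits_two_two_mul_add_one,
      sum_digits_two_two_mul, ih]

theorem sum_range_sum_range_four_pow_sum_digits_two (k : ℕ) :
    ∑ n ∈ range (∑ j ∈ range (k + 1), 4 ^ j), (digits 2 n).sum =
      k * ∑ j ∈ range (k + 1), 4 ^ j := by
  induction k with
  | zero => simp
  | succ k ih =>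
    set N := ∑ j ∈ range (k + 1), 4 ^ j
    rw [geom_sum_succ, sum_range_succ, show 4 * N = 2 * (2 * N) by ring,
      sum_range_two_mul_sum_digits_two, sum_range_two_mul_sum_digits_two, sum_digits_two_two_mul,
      sum_digits_two_two_mul, ih, sum_digits_two_sum_range_four_pow]
    ring

end Nat

theorem Complex.exists_norm_eq_one_notMem (s : Finset ℂ) : ∃ z : ℂ, ‖z‖ = 1 ∧ z ∉ s := by
  have hinf : (Metric.sphere (0 : ℂ) 1).Infinite :=
    (isPreconnected_sphere (by simp) 0 1).infinite_of_nontrivial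
      ⟨1, by simp, -1, by simp, by norm_num⟩
  obtain ⟨z, hz, hzs⟩ := hinf.exists_notMem_finset s
  exact ⟨z, by simpa using hz, hzs⟩

theorem Complex.eq_neg_of_norm_sub_eq_two {u v : ℂ} (hu : ‖u‖ = 1) (hv : ‖v‖ = 1)
    (h : ‖u - v‖ = 2) : u = -v := by
  refine eq_of_norm_eq_of_norm_add_eq (by rw [norm_neg, hu, hv]) ?_
  rw [← sub_eq_add_neg, h, norm_neg, hu, hv]
  norm_num

theorem Complex.norm_neg_sub_self {u : ℂ} (hu : ‖u‖ = 1) : ‖-u - u‖ = 2 := by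
  rw [← neg_add', norm_neg, ← two_mul, norm_mul, hu]
  norm_num

theorem prod_range_two_mul_norm_sub {a : ℕ → ℂ} {m : ℕ} (h : ∀ i < m, a (2 * i + 1) = -a (2 * i))
    (z : ℂ) : ∏ i ∈ range (2 * m), ‖z - a i‖ = ∏ i ∈ range m, ‖z ^ 2 - a (2 * i) ^ 2‖ := by
  rw [prod_range_two_mul]
  refine prod_congr rfl fun i hi => ?_
  rw [h i (mem_range.1 hi), ← norm_mul]
  ring_nf

namespace IsLejaSeq

variable {a : ℕ → ℂ}

theorem prod_norm_sub_le (ha : IsLejaSeq a) (n : ℕ) {z : ℂ} (hz : ‖z‖ = 1) :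
    ∏ i ∈ range n, ‖z - a i‖ ≤ ∏ i ∈ range n, ‖a n - a i‖ := by
  cases n with
  | zero => simp
  | succ n => exact ha.2 n z hz

theorem prod_norm_sub_pos (ha : IsLejaSeq a) (n : ℕ) : 0 < ∏ i ∈ range n, ‖a n - a i‖ := by
  obtain ⟨z, hz, hzs⟩ := Complex.exists_norm_eq_one_notMem ((range n).image a)
  refine (prod_pos fun i hi => ?_).trans_le (ha.prod_norm_sub_le n hz)
  exact norm_pos_iff.2 (sub_ne_zero.2 fun h => hzs (mem_image.2 ⟨i, hi, h.symm⟩))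

/-- Both `±a (2m)` maximize `∏_{i<2m} |z - a i|`, which depends on `z²` only, and only `-a (2m)`
also maximizes `|z - a (2m)|`. -/
theorem odd_eq_neg (ha : IsLejaSeq a) (m : ℕ) : a (2 * m + 1) = -a (2 * m) := by
  induction m using Nat.strong_induction_on with
  | _ m ih =>
  set Q : ℂ → ℝ := fun z => ∏ i ∈ range m, ‖z ^ 2 - a (2 * i) ^ 2‖
  have hprod : ∀ z, ∏ i ∈ range (2 * m), ‖z - a i‖ = Q z := prod_range_two_mul_norm_sub ih
  have hQ_le : Q (a (2 * m + 1)) ≤ Q (a (2 * m)) := by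
    rw [← hprod, ← hprod]
    exact ha.prod_norm_sub_le _ (ha.1 _)
  have hQ_pos : 0 < Q (a (2 * m)) := hprod _ ▸ ha.prod_norm_sub_pos _
  have hmax : Q (a (2 * m)) * 2 ≤ Q (a (2 * m + 1)) * ‖a (2 * m + 1) - a (2 * m)‖ := by
    have := ha.prod_norm_sub_le (2 * m + 1) (z := -a (2 * m)) (by rw [norm_neg, ha.1])
    rw [prod_range_succ, prod_range_succ, hprod, hprod, Complex.norm_neg_sub_self (ha.1 _)] at this
    simpa only [Q, neg_sq] using this
  have hdist_le : ‖a (2 * m + 1) - a (2 * m)‖ ≤ 2 := by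
    refine (norm_sub_le _ _).trans ?_
    rw [ha.1, ha.1]
    norm_num
  refine Complex.eq_neg_of_norm_sub_eq_two (ha.1 _) (ha.1 _) (le_antisymm hdist_le ?_)
  by_contra! hlt
  nlinarith [norm_nonneg (a (2 * m + 1) - a (2 * m))]

theorem prod_norm_sub_eq_prod_sq (ha : IsLejaSeq a) (m : ℕ) (z : ℂ) :
    ∏ i ∈ range (2 * m), ‖z - a i‖ = ∏ i ∈ range m, ‖z ^ 2 - a (2 * i) ^ 2‖ :=
  prod_range_two_mul_norm_sub (fun i _ => ha.odd_eq_neg i) z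

theorem sq_even (ha : IsLejaSeq a) : IsLejaSeq fun m => a (2 * m) ^ 2 := by
  refine ⟨fun n => by rw [norm_pow, ha.1, one_pow], fun m w hw => ?_⟩
  obtain ⟨z, rfl⟩ := IsAlgClosed.exists_pow_nat_eq w two_pos
  have hz : ‖z‖ = 1 := by
    rwa [norm_pow, pow_eq_one_iff_of_nonneg (norm_nonneg _) two_ne_zero] at hw
  have := ha.prod_norm_sub_le (2 * (m + 1)) hz
  rwa [ha.prod_norm_sub_eq_prod_sq, ha.prod_norm_sub_eq_prod_sq] at this

theorem prod_norm_sub_eq_two_pow (ha : IsLejaSeq a) (n : ℕ) :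
    ∏ i ∈ range n, ‖a n - a i‖ = 2 ^ (Nat.digits 2 n).sum := by
  induction n using Nat.strong_induction_on generalizing a with
  | _ n ih =>
  obtain ⟨m, rfl | rfl⟩ := n.even_or_odd'
  · rcases m.eq_zero_or_pos with rfl | hm
    · simp
    rw [ha.prod_norm_sub_eq_prod_sq, Nat.sum_digits_two_two_mul, ← ih m (by omega) ha.sq_even]
  · rw [prod_range_succ, ha.prod_norm_sub_eq_prod_sq, ha.odd_eq_neg, neg_sq,
      Complex.norm_neg_sub_self (ha.1 _), ih m (by omega) ha.sq_even, Nat.sum_digits_two_two_mul_add_one, pow_succ]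

end IsLejaSeq

theorem logEnergy_eq_neg_two_mul (a : ℕ → ℂ) (N : ℕ) :
    logEnergy a N = -2 * ∑ n ∈ range N, ∑ i ∈ range n, Real.log ‖a n - a i‖ := by
  have hterm (i j : ℕ) : Real.log (1 / ‖a i - a j‖) = -Real.log ‖a j - a i‖ := by
    rw [one_div, Real.log_inv, norm_sub_rev]
  rw [logEnergy, sum_range_ite_ne_eq_two_nsmul _ fun i j => by rw [norm_sub_rev], nsmul_eq_mul]
  simp only [hterm, sum_neg_distrib]
  push_cast
  ring

theorem IsLejaSeq.logEnergy_eq {a : ℕ → ℂ} (ha : IsLejaSeq a) (N : ℕ) :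
    logEnergy a N = -2 * Real.log 2 * ∑ n ∈ range N, ((Nat.digits 2 n).sum : ℝ) := by
  have hrow (n : ℕ) : ∑ i ∈ range n, Real.log ‖a n - a i‖ = (Nat.digits 2 n).sum * Real.log 2 := by
    rw [← Real.log_prod fun i _ => (prod_ne_zero_iff.1 (ha.prod_norm_sub_pos n).ne' i ‹_›),
      ha.prod_norm_sub_eq_two_pow, Real.log_pow]
  simp only [logEnergy_eq_neg_two_mul, hrow, ← sum_mul]
  ring

theorem tendsto_geom_sum_div_pow {r : ℝ} (hr : 1 < r) :
    Tendsto (fun k : ℕ => (∑ j ∈ range (k + 1), r ^ j) / r ^ k) atTop (𝓝 (r / (r - 1))) := by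
  have hform (k : ℕ) : (∑ j ∈ range (k + 1), r ^ j) / r ^ k = (r - r⁻¹ ^ k) / (r - 1) := by
    have : r - 1 ≠ 0 := sub_ne_zero.2 hr.ne'
    rw [geom_sum_eq hr.ne', inv_pow]
    field_simp
    ring
  have hlim := ((tendsto_pow_atTop_nhds_zero_of_lt_one (inv_nonneg.2 (by positivity))
    (inv_lt_one_of_one_lt₀ hr)).const_sub r).div_const (r - 1)
  rw [sub_zero] at hlim
  exact hlim.congr fun k => (hform k).symm

theorem IsLejaSeq.logEnergy_sum_range_four_pow {a : ℕ → ℂ} (ha : IsLejaSeq a) (k : ℕ) :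
    logEnergy a (∑ j ∈ range (k + 1), 4 ^ j) =
      -((∑ j ∈ range (k + 1), 4 ^ j : ℕ) * Real.log (4 ^ k)) := by
  rw [ha.logEnergy_eq, ← Nat.cast_sum, Nat.sum_range_sum_range_four_pow_sum_digits_two,
    Nat.cast_mul, Real.log_pow, show (4 : ℝ) = 2 ^ 2 by norm_num, Real.log_pow]
  push_cast
  ring

theorem leja_logEnergy_limit_along_geometric (a : ℕ → ℂ) (ha : IsLejaSeq a) :
    Tendsto (fun k : ℕ =>
        (logEnergy a (∑ j ∈ Finset.range (k + 1), 4 ^ j)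
            + ((∑ j ∈ Finset.range (k + 1), 4 ^ j : ℕ) : ℝ)
              * Real.log ((∑ j ∈ Finset.range (k + 1), 4 ^ j : ℕ) : ℝ))
          / ((∑ j ∈ Finset.range (k + 1), 4 ^ j : ℕ) : ℝ))
      atTop (𝓝 (Real.log (4 / 3))) := by
  have hlim := (Real.continuousAt_log (by norm_num)).tendsto.comp
    (tendsto_geom_sum_div_pow (r := 4) (by norm_num))
  rw [show (4 : ℝ) / (4 - 1) = 4 / 3 by norm_num] at hlim
  refine hlim.congr fun k => ?_
  have hNpos : (0 : ℝ) < ∑ j ∈ range (k + 1), (4 : ℝ) ^ j := by positivity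
  rw [ha.logEnergy_sum_range_four_pow, Function.comp_apply]
  push_cast
  rw [Real.log_div hNpos.ne' (by positivity)]
  field_simp
  ring
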